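/- arXiv:2001.03441 — 2 statements merged into one kernel-verified Lean document; each statement's English description precedes it below -/
import Mathlib

section
/- Let (A,p,0,½,1) be a mobi algebra and (X,q) an A-mobi space. If x,y ∈ X and a ∈ A satisfy q(x,a,y) = q(y,a,x), then q(x,a,y) = q(x,½,y). -/
/-- A mobi algebra: a set `A` with a ternary operation `p` and constants `e0`, `eh`, `e1`
satisfying axioms (A1)–(A8). -/
structure MobiAlgebra (A : Type*) where
  p : A → A → A → A
  e0 : A
  eh : A
  e1 : A
  ax1 : p e1 eh e0 = eh
  ax2 : ∀ a, p e0 a e1 = a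
  ax3 : ∀ a b, p a b a = a
  ax4 : ∀ a b, p a e0 b = a
  ax5 : ∀ a b, p a e1 b = b
  ax6 : ∀ a b₁ b₂, p a eh b₁ = p a eh b₂ → b₁ = b₂
  ax7 : ∀ a b c₁ c₂ c₃, p a (p c₁ c₂ c₃) b = p (p a c₁ b) c₂ (p a c₃ b)
  ax8 : ∀ a₁ a₂ b₁ b₂ c, p (p a₁ c b₁) eh (p a₂ c b₂) = p (p a₁ eh a₂) c (p b₁ eh b₂)

/-- An `A`-mobi space over a mobi algebra `M` on `A`: a set `X` with `q : X × A × X → X`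
satisfying axioms (X1)–(X5). -/
structure MobiSpace {A : Type*} (M : MobiAlgebra A) (X : Type*) where
  q : X → A → X → X
  sx1 : ∀ x y, q x M.e0 y = x
  sx2 : ∀ x y, q x M.e1 y = y
  sx3 : ∀ x a, q x a x = x
  sx4 : ∀ x y₁ y₂, q x M.eh y₁ = q x M.eh y₂ → y₁ = y₂
  sx5 : ∀ x y a b c, q (q x a y) b (q x c y) = q x (M.p a b c) y

/-! Writing `ā := p(1,a,0)`, axiom (A8) gives `p(a,½,ā) = ½`, and (X5) gives
`q(y,a,x) = q(x,ā,y)`. Hence `q(x,½,y) = q(q(x,a,y),½,q(y,a,x))`, which collapses by (X3)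
once `q(x,a,y) = q(y,a,x)`. -/

namespace MobiAlgebra

variable {A : Type*} (M : MobiAlgebra A)

def reflect (a : A) : A := M.p M.e1 a M.e0

theorem p_eh_reflect (a : A) : M.p a M.eh (M.reflect a) = M.eh := by
  have h := M.ax8 M.e0 M.e1 M.e1 M.e0 a
  rwa [M.ax2, M.ax2, M.ax1, M.ax3] at h

end MobiAlgebra

namespace MobiSpace

variable {A X : Type*} {M : MobiAlgebra A} (S : MobiSpace M X)

theorem q_swap (x y : X) (a : A) : S.q y a x = S.q x (M.reflect a) y := by
  rw [MobiAlgebra.reflect, ← S.sx5, S.sx2, S.sx1]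

theorem q_q_eh_q_swap (x y : X) (a : A) :
    S.q (S.q x a y) M.eh (S.q y a x) = S.q x M.eh y := by
  rw [S.q_swap x y a, S.sx5, M.p_eh_reflect]

end MobiSpace

/-- In an `A`-mobi space, if `q(x,a,y) = q(y,a,x)` then `q(x,a,y) = q(x,½,y)`. -/
theorem mobiSpace_meet {A X : Type*} (M : MobiAlgebra A) (S : MobiSpace M X) :
    ∀ x y : X, ∀ a : A, S.q x a y = S.q y a x → S.q x a y = S.q x M.eh y := by
  intro x y a h
  rw [← S.q_q_eh_q_swap x y a, ← h, S.sx3]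
end

section
/- Let (A,p,0,½,1) be a mobi algebra containing an element 2 with p(0,½,2) = 1, let (X,q) be an affine A-mobi space, and fix e ∈ X. Define a+b = p(0,2,p(a,½,b)) and a·b = p(0,a,b) on A, and on X define x ⊞ y = q(e,2,q(x,½,y)) and φ_a(x) = q(e,a,x). Then (X,⊞,e) is an abelian group (with -x = q(e,p(1,2,0),x)) and φ makes X a module over the unitary ring (A,+,·,0,1): φ_a(x ⊞ y) = φ_a(x) ⊞ φ_a(y), φ_{a+b}(x) = φ_a(x) ⊞ φ_b(x), φ_{a·b}(x) = φ_a(φ_b(x)), and φ_1(x) = x. -/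
namespace MobiAlgebra

variable {A : Type*} (M : MobiAlgebra A)

lemma p_half_comm (a b : A) : M.p a M.eh b = M.p b M.eh a := by
  conv_lhs => rw [← M.ax1]
  rw [M.ax7, M.ax5, M.ax4]

lemma p_e0_assoc (a b c : A) : M.p M.e0 (M.p M.e0 a b) c = M.p M.e0 a (M.p M.e0 b c) := by
  rw [M.ax7, M.ax4]

lemma p_e0_half_comm (a : A) : M.p M.e0 a M.eh = M.p M.e0 M.eh a := by
  simpa only [M.ax3, M.ax2] using (M.ax8 M.e0 M.e0 M.e0 M.e1 a).symm

variable {M} {two : A}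

lemma p_e0_two_half (htwo : M.p M.e0 M.eh two = M.e1) : M.p M.e0 two M.eh = M.e1 :=
  (M.p_e0_half_comm two).trans htwo

lemma p_e0_half_p_e0_two (htwo : M.p M.e0 M.eh two = M.e1) (a : A) :
    M.p M.e0 M.eh (M.p M.e0 a two) = a := by
  simpa only [M.ax3, htwo, M.ax2] using M.ax8 M.e0 M.e0 M.e0 two a

lemma p_e0_two_comm (htwo : M.p M.e0 M.eh two = M.e1) (a : A) :
    M.p M.e0 a two = M.p M.e0 two a := by
  apply M.ax6 M.e0
  have h := M.ax8 M.e0 M.e0 M.e0 a two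
  simp only [M.ax3] at h
  rw [p_e0_half_p_e0_two htwo, h, ← M.p_e0_assoc, p_e0_two_half htwo, M.ax5]

lemma p_neg_one_half_one (htwo : M.p M.e0 M.eh two = M.e1) :
    M.p (M.p M.e1 two M.e0) M.eh M.e1 = M.e0 := by
  have two_half_neg_one : M.p two M.eh (M.p M.e1 two M.e0) = M.eh := by
    simpa only [M.ax2, M.ax1, M.ax3] using M.ax8 M.e0 M.e1 M.e1 M.e0 two
  have half_half : M.p M.eh M.eh (M.p M.e1 M.eh two) = M.e1 := by
    simpa only [M.ax1, M.ax3, htwo] using M.ax8 M.e1 M.e1 M.e0 two M.eh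
  have h := M.ax8 (M.p M.e1 two M.e0) two M.e1 two M.eh
  rw [M.ax3 two M.eh, M.p_half_comm (M.p M.e1 two M.e0) two, two_half_neg_one, half_half] at h
  apply M.ax6 two
  rw [M.p_half_comm two, h, M.p_half_comm two, htwo]

end MobiAlgebra

namespace MobiSpace

variable {A X : Type*} {M : MobiAlgebra A} (Q : MobiSpace M X)

def IsAffine : Prop :=
  ∀ (x₁ x₂ y₁ y₂ : X) (a : A),
    Q.q (Q.q x₁ a y₁) M.eh (Q.q x₂ a y₂) = Q.q (Q.q x₁ M.eh x₂) a (Q.q y₁ M.eh y₂)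

def add (two : A) (e x y : X) : X := Q.q e two (Q.q x M.eh y)

lemma q_half_comm (x y : X) : Q.q x M.eh y = Q.q y M.eh x := by
  conv_lhs => rw [← M.ax1, ← Q.sx5, Q.sx2, Q.sx1]

lemma q_q_right (x y : X) (b c : A) : Q.q x b (Q.q x c y) = Q.q x (M.p M.e0 b c) y := by
  simpa only [Q.sx1] using Q.sx5 x y M.e0 b c

lemma IsAffine.q_half_q {Q : MobiSpace M X} (haff : Q.IsAffine) (x y₁ y₂ : X) (a : A) :
    Q.q (Q.q x a y₁) M.eh (Q.q x a y₂) = Q.q x a (Q.q y₁ M.eh y₂) := by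
  rw [haff, Q.sx3]

variable {Q} {two : A}

protected lemma zero_add (htwo : M.p M.e0 M.eh two = M.e1) (e x : X) : Q.add two e e x = x := by
  rw [add, q_q_right, MobiAlgebra.p_e0_two_half htwo, Q.sx2]

protected lemma add_comm (e x y : X) : Q.add two e x y = Q.add two e y x := by
  rw [add, add, q_half_comm]

protected lemma add_assoc (haff : Q.IsAffine) (htwo : M.p M.e0 M.eh two = M.e1) (e x y z : X) :
    Q.add two e (Q.add two e x y) z = Q.add two e x (Q.add two e y z) := by
  simp only [add]
  conv_lhs => rw [← Q.zero_add htwo e z, add, haff.q_half_q, haff x e y z]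
  conv_rhs => rw [← Q.zero_add htwo e x, add, haff.q_half_q, Q.q_half_comm e x]

protected lemma neg_add_cancel (htwo : M.p M.e0 M.eh two = M.e1) (e x : X) :
    Q.add two e (Q.q e (M.p M.e1 two M.e0) x) x = e := by
  have h : Q.q (Q.q e (M.p M.e1 two M.e0) x) M.eh x = e := by
    simpa only [Q.sx2, MobiAlgebra.p_neg_one_half_one htwo, Q.sx1]
      using Q.sx5 e x (M.p M.e1 two M.e0) M.eh M.e1
  rw [add, h, Q.sx3]

lemma q_add (haff : Q.IsAffine) (htwo : M.p M.e0 M.eh two = M.e1) (e : X) (a : A) (x y : X) :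
    Q.q e a (Q.add two e x y) = Q.add two e (Q.q e a x) (Q.q e a y) := by
  rw [add, add, haff.q_half_q, q_q_right, q_q_right, MobiAlgebra.p_e0_two_comm htwo]

lemma add_q (e : X) (a b : A) (x : X) :
    Q.q e (M.p M.e0 two (M.p a M.eh b)) x = Q.add two e (Q.q e a x) (Q.q e b x) := by
  rw [add, Q.sx5, q_q_right]

end MobiSpace

/-- Theorem 6.2: if the mobi algebra `A` contains `2` with `p(0,½,2) = 1` and
`(X,q)` is an affine `A`-mobi space with a chosen `e ∈ X`, then setting
`a + b = p(0,2,p(a,½,b))`, `a·b = p(0,a,b)`, `x ⊞ y = q(e,2,q(x,½,y))`, `φ_a(x) = q(e,a,x)`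
and `-x = q(e,p(1,2,0),x)`, the system `(X,⊞,e)` is an abelian group and `φ` makes `X` a
module over the unitary ring `(A,+,·,0,1)`. -/
theorem affineMobiSpace_module {A X : Type*} (M : MobiAlgebra A) (Q : MobiSpace M X)
    (haffine : ∀ (x₁ x₂ y₁ y₂ : X) (a : A),
      Q.q (Q.q x₁ a y₁) M.eh (Q.q x₂ a y₂) = Q.q (Q.q x₁ M.eh x₂) a (Q.q y₁ M.eh y₂))
    (two : A) (htwo : M.p M.e0 M.eh two = M.e1)
    (e : X)
    (add : A → A → A) (hadd : ∀ a b, add a b = M.p M.e0 two (M.p a M.eh b))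
    (mul : A → A → A) (hmul : ∀ a b, mul a b = M.p M.e0 a b)
    (xadd : X → X → X) (hxadd : ∀ x y, xadd x y = Q.q e two (Q.q x M.eh y))
    (φ : A → X → X) (hφ : ∀ a x, φ a x = Q.q e a x)
    (neg : X → X) (hneg : ∀ x, neg x = Q.q e (M.p M.e1 two M.e0) x) :
    (∀ x y z : X, xadd (xadd x y) z = xadd x (xadd y z)) ∧
    (∀ x y : X, xadd x y = xadd y x) ∧
    (∀ x : X, xadd e x = x) ∧
    (∀ x : X, xadd (neg x) x = e) ∧
    (∀ (a : A) (x y : X), φ a (xadd x y) = xadd (φ a x) (φ a y)) ∧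
    (∀ (a b : A) (x : X), φ (add a b) x = xadd (φ a x) (φ b x)) ∧
    (∀ (a b : A) (x : X), φ (mul a b) x = φ a (φ b x)) ∧
    (∀ x : X, φ M.e1 x = x) := by
  obtain rfl : xadd = Q.add two e := funext₂ hxadd
  obtain rfl : φ = Q.q e := funext₂ hφ
  simp only [hadd, hmul, hneg]
  exact ⟨Q.add_assoc haffine htwo e, Q.add_comm e, Q.zero_add htwo e, Q.neg_add_cancel htwo e,
    Q.q_add haffine htwo e, Q.add_q e, fun a b x => (Q.q_q_right e x a b).symm, Q.sx2 e⟩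
end
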